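/- arXiv:1807.01500 — 2 statements merged into one kernel-verified Lean document; each statement's English description precedes it below -/
import Mathlib

section
/- For every integer L ≥ 3 and any two triples (a,b,c) and (a',b',c') of nonnegative integers with a + b + c = a' + b' + c' = L − 3, the braids w(a,b,c) and w(a',b',c') are conjugate in the braid group B_7. -/
/-!
Write `w(a,b,c) = P X^a Q Y^b R Z^c` with `P = σ2σ1σ4σ6`, `X = σ1σ4σ6`, `Q = σ1σ4σ3σ5σ6σ5`,
`Y = σ1σ3σ5`, `R = σ5σ4σ3σ2σ1σ6`, `Z = σ2σ4σ6`. Conjugation by `σ4` moves one factor from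
`X^a` to `Y^b`, and conjugation by `σ6` moves one factor from `Y^b` to `Z^c`:
`w(a+1,b,c) σ4 = σ4 w(a,b+1,c)` and `w(a,b+1,c) σ6 = σ6 w(a,b,c+1)`.
The conjugator commutes with `P`, `X` and `Z`, and the rest is a few short identities in the
Artin relations: for `σ4`, `R σ4 = σ3 R`, `σ3` commutes with `Y`, and `X Q σ3 = σ4 Q Y`; for `σ6`,
`Y R σ6 = σ5 R Z`, `σ5` commutes with `Y`, and `σ6 Q = Q σ5`. Hence every `w(a,b,c)` is
conjugate to `w(0,0,a+b+c)`.
-/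

/-- The Artin relations for the braid group on `n + 1` strands (with `n` generators
`σ_1, …, σ_n`, here indexed by `Fin n` via `σ_{i+1} ↔ i`). -/
def braidRels (n : ℕ) : Set (FreeGroup (Fin n)) :=
  { r | ∃ i j : Fin n,
      ((i : ℕ) + 1 = (j : ℕ) ∧
        r = FreeGroup.of i * FreeGroup.of j * FreeGroup.of i *
            (FreeGroup.of j * FreeGroup.of i * FreeGroup.of j)⁻¹) ∨
      ((i : ℕ) + 2 ≤ (j : ℕ) ∧
        r = FreeGroup.of i * FreeGroup.of j * (FreeGroup.of j * FreeGroup.of i)⁻¹) }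

/-- The braid group `B_7`, presented with generators `σ_1, …, σ_6` and the Artin
relations. -/
abbrev B7 : Type := PresentedGroup (braidRels 6)

/-- The Artin generator `σ_{i+1}` of `B_7` (so `s 0 = σ_1`, …, `s 5 = σ_6`). -/
def s (i : Fin 6) : B7 := PresentedGroup.of i

/-- The braid `w(a,b,c) = (σ2σ1σ4σ6)·(σ1σ4σ6)^a·(σ1σ4σ3σ5σ6σ5)·(σ1σ3σ5)^b·
(σ5σ4σ3σ2σ1σ6)·(σ2σ4σ6)^c ∈ B_7`. -/
def w (a b c : ℕ) : B7 :=
  (s 1 * s 0 * s 3 * s 5) * (s 0 * s 3 * s 5) ^ a *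
    (s 0 * s 3 * s 2 * s 4 * s 5 * s 4) * (s 0 * s 2 * s 4) ^ b *
    (s 4 * s 3 * s 2 * s 1 * s 0 * s 5) * (s 1 * s 3 * s 5) ^ c

namespace PresentedGroup

variable {n : ℕ} {i j : Fin n}

theorem braidRels_of_mul_of_mul_of (h : (i : ℕ) + 1 = j) :
    (of i * of j * of i : PresentedGroup (braidRels n)) = of j * of i * of j := by
  simpa only [of, map_mul] using
    mk_eq_mk_of_mul_inv_mem (rels := braidRels n) ⟨i, j, .inl ⟨h, rfl⟩⟩

theorem braidRels_commute_of (h : (i : ℕ) + 2 ≤ j) :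
    Commute (of i : PresentedGroup (braidRels n)) (of j) := by
  simpa only [of, map_mul, commute_iff_eq] using
    mk_eq_mk_of_mul_inv_mem (rels := braidRels n) ⟨i, j, .inr ⟨h, rfl⟩⟩

end PresentedGroup

section ThreePowWord

variable {M : Type*} [Monoid M] (P X Q Y R Z : M)

def threePowWord (a b c : ℕ) : M := P * X ^ a * Q * Y ^ b * R * Z ^ c

variable {P X Q Y R Z}

theorem threePowWord_succ_left_mul {t t' : M} (hP : Commute P t) (hX : Commute X t)
    (hZ : Commute Z t) (hR : R * t = t' * R) (hY : Commute Y t')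
    (hXQ : X * Q * t' = t * Q * Y) (a b c : ℕ) :
    threePowWord P X Q Y R Z (a + 1) b c * t = t * threePowWord P X Q Y R Z a (b + 1) c :=
  calc threePowWord P X Q Y R Z (a + 1) b c * t
      = P * X ^ a * X * Q * Y ^ b * (R * t) * Z ^ c := by
        simp only [threePowWord, pow_succ, mul_assoc, (hZ.pow_left c).eq]
    _ = P * X ^ a * (X * Q * t') * Y ^ b * R * Z ^ c := by
        simp only [hR, mul_assoc, (hY.pow_left b).left_comm]
    _ = P * X ^ a * t * Q * Y ^ (b + 1) * R * Z ^ c := by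
        simp only [hXQ, pow_succ', mul_assoc]
    _ = t * threePowWord P X Q Y R Z a (b + 1) c := by
        rw [(hP.mul_left (hX.pow_left a)).eq]
        simp only [threePowWord, mul_assoc]

theorem threePowWord_succ_mid_mul {u u' : M} (hP : Commute P u) (hX : Commute X u)
    (hZ : Commute Z u) (hQ : u * Q = Q * u') (hY : Commute Y u')
    (hYR : Y * R * u = u' * R * Z) (a b c : ℕ) :
    threePowWord P X Q Y R Z a (b + 1) c * u = u * threePowWord P X Q Y R Z a b (c + 1) :=
  calc threePowWord P X Q Y R Z a (b + 1) c * u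
      = P * X ^ a * Q * Y ^ b * (Y * R * u) * Z ^ c := by
        simp only [threePowWord, pow_succ, mul_assoc, (hZ.pow_left c).eq]
    _ = P * X ^ a * (u * Q) * Y ^ b * R * Z ^ (c + 1) := by
        simp only [hYR, hQ, pow_succ', mul_assoc, (hY.pow_left b).left_comm]
    _ = u * threePowWord P X Q Y R Z a b (c + 1) := by
        rw [← mul_assoc, (hP.mul_left (hX.pow_left a)).eq]
        simp only [threePowWord, mul_assoc]

end ThreePowWord

section B7

variable {i j : Fin 6}

theorem s_mul_s_mul_s_mul (h : (i : ℕ) + 1 = j) (x : B7) :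
    s i * (s j * (s i * x)) = s j * (s i * (s j * x)) := by
  simp only [← mul_assoc, s, PresentedGroup.braidRels_of_mul_of_mul_of h]

/- As `simp` lemmas these move a generator left past distant generators of larger index. The
resulting normal forms absorb all far commutations, so each `calc` below displays only the braid
relation it uses. -/
theorem s_mul_s_of_far (h : (i : ℕ) + 2 ≤ j) : s j * s i = s i * s j :=
  (PresentedGroup.braidRels_commute_of h).eq.symm

theorem s_mul_s_mul_of_far (h : (i : ℕ) + 2 ≤ j) (x : B7) : s j * (s i * x) = s i * (s j * x) :=
  (PresentedGroup.braidRels_commute_of h).symm.left_comm x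

def wP : B7 := s 1 * s 0 * s 3 * s 5
def wX : B7 := s 0 * s 3 * s 5
def wQ : B7 := s 0 * s 3 * s 2 * s 4 * s 5 * s 4
def wY : B7 := s 0 * s 2 * s 4
def wR : B7 := s 4 * s 3 * s 2 * s 1 * s 0 * s 5
def wZ : B7 := s 1 * s 3 * s 5

theorem w_eq_threePowWord (a b c : ℕ) : w a b c = threePowWord wP wX wQ wY wR wZ a b c := rfl

theorem commute_wP_s3 : Commute wP (s 3) := by
  simp (disch := decide) only [wP, commute_iff_eq, mul_assoc, s_mul_s_of_far, s_mul_s_mul_of_far]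

theorem commute_wX_s3 : Commute wX (s 3) := by
  simp (disch := decide) only [wX, commute_iff_eq, mul_assoc, s_mul_s_of_far, s_mul_s_mul_of_far]

theorem commute_wZ_s3 : Commute wZ (s 3) := by
  simp (disch := decide) only [wZ, commute_iff_eq, mul_assoc, s_mul_s_of_far, s_mul_s_mul_of_far]

theorem commute_wY_s2 : Commute wY (s 2) := by
  simp (disch := decide) only [wY, commute_iff_eq, mul_assoc, s_mul_s_of_far, s_mul_s_mul_of_far]

theorem commute_wP_s5 : Commute wP (s 5) := by
  simp (disch := decide) only [wP, commute_iff_eq, mul_assoc, s_mul_s_mul_of_far]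

theorem commute_wX_s5 : Commute wX (s 5) := by
  simp (disch := decide) only [wX, commute_iff_eq, mul_assoc, s_mul_s_mul_of_far]

theorem commute_wZ_s5 : Commute wZ (s 5) := by
  simp (disch := decide) only [wZ, commute_iff_eq, mul_assoc, s_mul_s_mul_of_far]

theorem commute_wY_s4 : Commute wY (s 4) := by
  simp (disch := decide) only [wY, commute_iff_eq, mul_assoc, s_mul_s_mul_of_far]

theorem wR_mul_s1 : wR * s 1 = s 0 * wR :=
  calc wR * s 1 = s 4 * (s 3 * (s 2 * (s 1 * (s 0 * (s 1 * s 5))))) := by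
        simp (disch := decide) only [wR, mul_assoc, s_mul_s_of_far]
    _ = s 4 * (s 3 * (s 2 * (s 0 * (s 1 * (s 0 * s 5))))) := by
        rw [s_mul_s_mul_s_mul (i := 0) (j := 1) rfl]
    _ = s 0 * wR := by
        simp (disch := decide) only [wR, mul_assoc, s_mul_s_mul_of_far]

theorem wR_mul_s3 : wR * s 3 = s 2 * wR :=
  calc wR * s 3 = s 4 * (s 3 * (s 2 * (s 3 * (s 1 * (s 0 * s 5))))) := by
        simp (disch := decide) only [wR, mul_assoc, s_mul_s_of_far, s_mul_s_mul_of_far]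
    _ = s 4 * (s 2 * (s 3 * (s 2 * (s 1 * (s 0 * s 5))))) := by
        rw [s_mul_s_mul_s_mul (i := 2) (j := 3) rfl]
    _ = s 2 * wR := by
        simp (disch := decide) only [wR, mul_assoc, s_mul_s_mul_of_far]

theorem wX_mul_wQ_mul_s2 : wX * wQ * s 2 = s 3 * wQ * wY :=
  calc wX * wQ * s 2
        = s 0 * (s 0 * (s 3 * (s 3 * (s 2 * (s 2 * (s 5 * (s 4 * (s 5 * s 4)))))))) := by
        simp (disch := decide) only [wX, wQ, mul_assoc, s_mul_s_of_far, s_mul_s_mul_of_far]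
    _ = s 0 * (s 0 * (s 3 * (s 3 * (s 2 * (s 2 * (s 4 * (s 5 * (s 4 * s 4)))))))) := by
        rw [s_mul_s_mul_s_mul (i := 4) (j := 5) rfl]
    _ = s 3 * wQ * wY := by
        simp (disch := decide) only [wQ, wY, mul_assoc, s_mul_s_mul_of_far]

theorem s5_mul_wQ : s 5 * wQ = wQ * s 4 :=
  calc s 5 * wQ = s 0 * (s 3 * (s 2 * (s 5 * (s 4 * (s 5 * s 4))))) := by
        simp (disch := decide) only [wQ, mul_assoc, s_mul_s_mul_of_far]
    _ = wQ * s 4 := by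
        rw [← s_mul_s_mul_s_mul (i := 4) (j := 5) rfl]
        simp only [wQ, mul_assoc]

theorem wY_mul_wR_mul_s5 : wY * wR * s 5 = s 4 * wR * wZ :=
  calc wY * wR * s 5 = s 4 * (s 0 * (s 2 * wR)) * s 5 := by
        simp (disch := decide) only [wY, mul_assoc, s_mul_s_mul_of_far]
    _ = s 4 * wR * wZ := by
        rw [← wR_mul_s3, ← mul_assoc (s 0), ← wR_mul_s1]
        simp only [wZ, mul_assoc]

end B7

theorem w_succ_left_mul_s3 (a b c : ℕ) : w (a + 1) b c * s 3 = s 3 * w a (b + 1) c := by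
  simp only [w_eq_threePowWord]
  exact threePowWord_succ_left_mul commute_wP_s3 commute_wX_s3 commute_wZ_s3 wR_mul_s3
    commute_wY_s2 wX_mul_wQ_mul_s2 a b c

theorem w_succ_mid_mul_s5 (a b c : ℕ) : w a (b + 1) c * s 5 = s 5 * w a b (c + 1) := by
  simp only [w_eq_threePowWord]
  exact threePowWord_succ_mid_mul commute_wP_s5 commute_wX_s5 commute_wZ_s5 s5_mul_wQ
    commute_wY_s4 wY_mul_wR_mul_s5 a b c

theorem isConj_w_succ_left (a b c : ℕ) : IsConj (w (a + 1) b c) (w a (b + 1) c) :=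
  IsConj.symm ⟨toUnits (s 3), (w_succ_left_mul_s3 a b c).symm⟩

theorem isConj_w_succ_mid (a b c : ℕ) : IsConj (w a (b + 1) c) (w a b (c + 1)) :=
  IsConj.symm ⟨toUnits (s 5), (w_succ_mid_mul_s5 a b c).symm⟩

theorem isConj_w_zero_left (b c : ℕ) : IsConj (w 0 b c) (w 0 0 (b + c)) := by
  induction b generalizing c with
  | zero => rw [zero_add]
  | succ b ih =>
    rw [Nat.add_right_comm, add_assoc]
    exact (isConj_w_succ_mid 0 b c).trans (ih (c + 1))

theorem isConj_w_zero_zero (a b c : ℕ) : IsConj (w a b c) (w 0 0 (a + b + c)) := by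
  induction a generalizing b with
  | zero => rw [zero_add]; exact isConj_w_zero_left b c
  | succ a ih =>
    rw [Nat.add_right_comm a 1 b]
    exact (isConj_w_succ_left a b c).trans (ih (b + 1))

theorem w_conj_w_general (L a b c a' b' c' : ℕ)
    (habc : a + b + c = L - 3) (habc' : a' + b' + c' = L - 3) :
    ∃ g : B7, g * w a b c * g⁻¹ = w a' b' c' := by
  have h := isConj_w_zero_zero a b c
  have h' := isConj_w_zero_zero a' b' c'
  rw [habc] at h
  rw [habc'] at h'
  exact isConj_iff.mp (h.trans h'.symm)

/-- For every `L ≥ 3` and any two triples of nonnegative integers summing to `L - 3`,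
the braids `w(a,b,c)` and `w(a',b',c')` are conjugate in `B_7`. -/
theorem w_conj_w (L a b c a' b' c' : ℕ) (hL : 3 ≤ L)
    (habc : a + b + c = L - 3) (habc' : a' + b' + c' = L - 3) :
    ∃ g : B7, g * w a b c * g⁻¹ = w a' b' c' :=
  w_conj_w_general L a b c a' b' c' habc habc'
end

section
/- For every integer L ≥ 3, the map (a,b,c) ↦ w(a,b,c) is injective on the set of triples of nonnegative integers with a + b + c = L − 3: if w(a,b,c) = w(a',b',c') in B_7 with a + b + c = a' + b' + c' = L − 3, then (a,b,c) = (a',b',c'). -/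
/-!
Under the Burau representation at `t = -1`, the generator `σ_{i+1}` acts as `1 + N_i` with
`N_i = (e_i + e_{i+1}) (e_i - e_{i+1})ᵀ`. These matrices square to zero, and `N_i N_j = 0` when
`|i - j| ≥ 2`, so each of the blocks `σ1σ4σ6`, `σ1σ3σ5`, `σ2σ4σ6` maps to a unipotent
`1 + X` with `X² = 0`, and its `m`-th power maps to `1 + m X`. The image of `w(a,b,c)` is then a
polynomial in `a`, `b`, `c`. Three of its entries are `2 + a + b + c`, `2 + b + c` and
`4 + a + b`, and these determine `(a, b, c)`.
-/

open Matrix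

section RingIdentities

variable {R : Type*}

theorem one_add_pow_of_mul_self_eq_zero [Semiring R] {x : R} (hx : x * x = 0) (m : ℕ) :
    (1 + x) ^ m = 1 + m • x := by
  induction m with
  | zero => simp
  | succ m ih =>
    rw [pow_succ, ih, add_mul, one_mul, smul_mul_assoc, mul_add, mul_one, hx, add_zero,
      succ_nsmul]
    abel

theorem one_add_mul_one_add_comm [Semiring R] {x y : R} (hxy : x * y = 0) (hyx : y * x = 0) :
    (1 + x) * (1 + y) = (1 + y) * (1 + x) := by
  simp only [mul_add, add_mul, one_mul, mul_one, hxy, hyx]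
  abel

theorem one_add_mul_one_add_mul_one_add [Semiring R] {x y z : R} (hxy : x * y = 0)
    (hxz : x * z = 0) (hyz : y * z = 0) : (1 + x) * (1 + y) * (1 + z) = 1 + (x + y + z) := by
  simp only [mul_add, add_mul, one_mul, mul_one, hxy, hxz, hyz, add_zero]
  abel

theorem braid_rel_one_add [Ring R] {x y : R} (hx : x * x = 0) (hy : y * y = 0)
    (hxyx : x * y * x = -x) (hyxy : y * x * y = -y) :
    (1 + x) * (1 + y) * (1 + x) = (1 + y) * (1 + x) * (1 + y) := by
  simp only [mul_add, add_mul, one_mul, mul_one, hx, hy, hxyx, hyxy]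
  abel

theorem mul_one_add_nsmul_expand [Semiring R] (p x q y r z : R) (a b c : ℕ) :
    p * (1 + a • x) * q * (1 + b • y) * r * (1 + c • z) =
      p * q * r + a • (p * x * q * r) + b • (p * q * y * r) + c • (p * q * r * z) +
        (a * b) • (p * x * q * y * r) + (a * c) • (p * x * q * r * z) +
        (b * c) • (p * q * y * r * z) + (a * b * c) • (p * x * q * y * r * z) := by
  simp only [mul_add, add_mul, mul_one, smul_mul_assoc, mul_smul_comm, smul_add, smul_smul,
    mul_assoc]
  simp only [Nat.mul_comm, Nat.mul_left_comm]
  abel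

end RingIdentities

theorem Matrix.mul_one_add_nsmul_apply {m R : Type*} [Fintype m] [DecidableEq m] [Semiring R]
    {p x q y r z : Matrix m m R} {i j : m} {k₀ k₁ k₂ k₃ : R}
    (h : (p * q * r) i j = k₀ ∧ (p * x * q * r) i j = k₁ ∧ (p * q * y * r) i j = k₂ ∧
      (p * q * r * z) i j = k₃ ∧ (p * x * q * y * r) i j = 0 ∧ (p * x * q * r * z) i j = 0 ∧
      (p * q * y * r * z) i j = 0 ∧ (p * x * q * y * r * z) i j = 0)
    (a b c : ℕ) :
    (p * (1 + a • x) * q * (1 + b • y) * r * (1 + c • z)) i j =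
      k₀ + a * k₁ + b * k₂ + c * k₃ := by
  obtain ⟨h₀, h₁, h₂, h₃, h₄, h₅, h₆, h₇⟩ := h
  rw [mul_one_add_nsmul_expand]
  simp only [add_apply, smul_apply]
  simp only [h₀, h₁, h₂, h₃, h₄, h₅, h₆, h₇, smul_zero, add_zero, nsmul_eq_mul]

namespace BraidGroup

section Burau

variable (R : Type*) [CommRing R] {n : ℕ}

/- The unreduced Burau matrix of `σ_{i+1}` at `t = -1` is `1 + burauNil R i`: the block
`[[2, -1], [1, 0]]` on the coordinates `i, i + 1`. -/

def burauU (i : Fin n) : Fin (n + 1) → R := Pi.single i.castSucc 1 + Pi.single i.succ 1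

def burauV (i : Fin n) : Fin (n + 1) → R := Pi.single i.castSucc 1 - Pi.single i.succ 1

def burauNil (i : Fin n) : Matrix (Fin (n + 1)) (Fin (n + 1)) R :=
  vecMulVec (burauU R i) (burauV R i)

variable {R}

theorem burauV_dotProduct_burauU (i j : Fin n) :
    burauV R i ⬝ᵥ burauU R j =
      (if (i : ℕ) = j + 1 then 1 else 0) - (if (i : ℕ) + 1 = j then 1 else 0) := by
  simp only [burauV, burauU, sub_dotProduct, dotProduct_add, single_dotProduct, one_mul,
    Pi.single_apply, Fin.ext_iff, Fin.val_castSucc, Fin.val_succ]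
  split_ifs <;> first | omega | ring

theorem burauNil_mul_burauNil (i j : Fin n) :
    burauNil R i * burauNil R j =
      (burauV R i ⬝ᵥ burauU R j) • vecMulVec (burauU R i) (burauV R j) := by
  rw [burauNil, burauNil, vecMulVec_mul_vecMulVec, vecMulVec_smul]

theorem burauNil_mul_burauNil_mul_burauNil (i j k : Fin n) :
    burauNil R i * burauNil R j * burauNil R k =
      ((burauV R i ⬝ᵥ burauU R j) * (burauV R j ⬝ᵥ burauU R k)) •
        vecMulVec (burauU R i) (burauV R k) := by
  rw [burauNil_mul_burauNil, smul_mul_assoc, burauNil, vecMulVec_mul_vecMulVec, vecMulVec_smul,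
    smul_smul]

theorem burauNil_mul_self (i : Fin n) : burauNil R i * burauNil R i = 0 := by
  simp [burauNil_mul_burauNil, burauV_dotProduct_burauU]

theorem burauNil_mul_of_add_two_le {i j : Fin n} (h : (i : ℕ) + 2 ≤ j) :
    burauNil R i * burauNil R j = 0 ∧ burauNil R j * burauNil R i = 0 := by
  simp only [burauNil_mul_burauNil, burauV_dotProduct_burauU]
  constructor <;> rw [if_neg (by omega), if_neg (by omega), sub_zero, zero_smul]

theorem burauNil_mul_mul_self_of_add_one_eq {i j : Fin n} (h : (i : ℕ) + 1 = j) :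
    burauNil R i * burauNil R j * burauNil R i = -burauNil R i ∧
      burauNil R j * burauNil R i * burauNil R j = -burauNil R j := by
  have h₁ : (i : ℕ) ≠ j + 1 := by omega
  have h₂ : (j : ℕ) + 1 ≠ i := by omega
  simp only [burauNil_mul_burauNil_mul_burauNil, burauV_dotProduct_burauU]
  constructor <;> simp [if_pos h, if_pos h.symm, if_neg h₁, if_neg h₂, burauNil]

theorem one_add_burauNil_triple_pow {i j k : Fin n} (hij : (i : ℕ) + 2 ≤ j)
    (hjk : (j : ℕ) + 2 ≤ k) (m : ℕ) :
    ((1 + burauNil R i) * (1 + burauNil R j) * (1 + burauNil R k)) ^ m =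
      1 + m • (burauNil R i + burauNil R j + burauNil R k) := by
  obtain ⟨hij, hji⟩ := burauNil_mul_of_add_two_le (R := R) hij
  obtain ⟨hjk, hkj⟩ := burauNil_mul_of_add_two_le (R := R) hjk
  obtain ⟨hik, hki⟩ := burauNil_mul_of_add_two_le (R := R) (i := i) (j := k) (by omega)
  rw [one_add_mul_one_add_mul_one_add hij hik hjk, one_add_pow_of_mul_self_eq_zero]
  simp only [add_mul, mul_add, burauNil_mul_self, hij, hji, hjk, hkj, hik, hki, add_zero]

variable (R)

def burauGen (i : Fin n) : GL (Fin (n + 1)) R where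
  val := 1 + burauNil R i
  inv := 1 - burauNil R i
  val_inv := by simp [add_mul, mul_sub, burauNil_mul_self]
  inv_val := by simp [sub_mul, mul_add, burauNil_mul_self]

variable {R}

@[simp]
theorem val_burauGen (i : Fin n) : (burauGen R i : Matrix _ _ R) = 1 + burauNil R i := rfl

theorem burauGen_rels : ∀ r ∈ braidRels n, FreeGroup.lift (burauGen R) r = 1 := by
  rintro r ⟨i, j, ⟨hij, rfl⟩ | ⟨hij, rfl⟩⟩ <;>
    simp only [map_mul, map_inv, FreeGroup.lift_apply_of, mul_inv_eq_one, Units.ext_iff,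
      Units.val_mul, val_burauGen]
  · obtain ⟨hiji, hjij⟩ := burauNil_mul_mul_self_of_add_one_eq (R := R) hij
    exact braid_rel_one_add (burauNil_mul_self i) (burauNil_mul_self j) hiji hjij
  · obtain ⟨hij, hji⟩ := burauNil_mul_of_add_two_le (R := R) hij
    exact one_add_mul_one_add_comm hij hji

variable (R n)

def burauNegOne : PresentedGroup (braidRels n) →* GL (Fin (n + 1)) R :=
  PresentedGroup.toGroup burauGen_rels

variable {R n}

@[simp]
theorem burauNegOne_of (i : Fin n) : burauNegOne R n (PresentedGroup.of i) = burauGen R i :=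
  PresentedGroup.toGroup.of burauGen_rels

end Burau

section SevenStrands

local notation "σ" i => (1 + burauNil ℤ i : Matrix (Fin 7) (Fin 7) ℤ)

def burauα : Matrix (Fin 7) (Fin 7) ℤ := (σ 1) * (σ 0) * (σ 3) * (σ 5)

def burauβ : Matrix (Fin 7) (Fin 7) ℤ := (σ 0) * (σ 3) * (σ 2) * (σ 4) * (σ 5) * (σ 4)

def burauγ : Matrix (Fin 7) (Fin 7) ℤ := (σ 4) * (σ 3) * (σ 2) * (σ 1) * (σ 0) * (σ 5)

def burauX : Matrix (Fin 7) (Fin 7) ℤ := burauNil ℤ 0 + burauNil ℤ 3 + burauNil ℤ 5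

def burauY : Matrix (Fin 7) (Fin 7) ℤ := burauNil ℤ 0 + burauNil ℤ 2 + burauNil ℤ 4

def burauZ : Matrix (Fin 7) (Fin 7) ℤ := burauNil ℤ 1 + burauNil ℤ 3 + burauNil ℤ 5

theorem burauNegOne_w (a b c : ℕ) :
    (burauNegOne ℤ 6 (w a b c) : Matrix (Fin 7) (Fin 7) ℤ) =
      burauα * (1 + a • burauX) * burauβ * (1 + b • burauY) * burauγ * (1 + c • burauZ) := by
  simp only [w, s, map_mul, map_pow, burauNegOne_of, Units.val_mul, Units.val_pow_eq_pow_val,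
    val_burauGen]
  rw [one_add_burauNil_triple_pow (by decide) (by decide),
    one_add_burauNil_triple_pow (by decide) (by decide),
    one_add_burauNil_triple_pow (by decide) (by decide)]
  rfl

theorem burauNegOne_w_apply_zero_two (a b c : ℕ) :
    (burauNegOne ℤ 6 (w a b c) : Matrix (Fin 7) (Fin 7) ℤ) 0 2 = 2 + a + b + c := by
  rw [burauNegOne_w]
  refine (mul_one_add_nsmul_apply (k₀ := 2) (k₁ := 1) (k₂ := 1) (k₃ := 1) ?_ a b c).trans
    (by ring)
  decide

theorem burauNegOne_w_apply_one_three (a b c : ℕ) :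
    (burauNegOne ℤ 6 (w a b c) : Matrix (Fin 7) (Fin 7) ℤ) 1 3 = 2 + b + c := by
  rw [burauNegOne_w]
  refine (mul_one_add_nsmul_apply (k₀ := 2) (k₁ := 0) (k₂ := 1) (k₃ := 1) ?_ a b c).trans
    (by ring)
  decide

theorem burauNegOne_w_apply_five_zero (a b c : ℕ) :
    (burauNegOne ℤ 6 (w a b c) : Matrix (Fin 7) (Fin 7) ℤ) 5 0 = 4 + a + b := by
  rw [burauNegOne_w]
  refine (mul_one_add_nsmul_apply (k₀ := 4) (k₁ := 1) (k₂ := 1) (k₃ := 0) ?_ a b c).trans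
    (by ring)
  decide

end SevenStrands

end BraidGroup

open BraidGroup

theorem w_injective_general (a b c a' b' c' : ℕ)
    (hw : w a b c = w a' b' c') :
    (a, b, c) = (a', b', c') := by
  have h₀₂ : (2 + a + b + c : ℤ) = 2 + a' + b' + c' := by
    rw [← burauNegOne_w_apply_zero_two, hw, burauNegOne_w_apply_zero_two]
  have h₁₃ : (2 + b + c : ℤ) = 2 + b' + c' := by
    rw [← burauNegOne_w_apply_one_three, hw, burauNegOne_w_apply_one_three]
  have h₅₀ : (4 + a + b : ℤ) = 4 + a' + b' := by
    rw [← burauNegOne_w_apply_five_zero, hw, burauNegOne_w_apply_five_zero]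
  simp only [Prod.mk.injEq]
  omega

/-- For every `L ≥ 3`, the map `(a,b,c) ↦ w(a,b,c)` is injective on triples of
nonnegative integers with `a + b + c = L - 3`. -/
theorem w_injective (L a b c a' b' c' : ℕ) (hL : 3 ≤ L)
    (habc : a + b + c = L - 3) (habc' : a' + b' + c' = L - 3)
    (hw : w a b c = w a' b' c') :
    (a, b, c) = (a', b', c') :=
  w_injective_general a b c a' b' c' hw
end
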